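/- Let H be a Hopf algebra over a field k and for φ ∈ H* (the linear dual) define the left coregular representation R*_φ : H → H by R*_φ = (id ⊗ φ) ∘ Δ. Let W be the fundamental operator W(g ⊗ h) = Σ g₍₁₎ ⊗ g₍₂₎h with inverse W⁻¹(g ⊗ h) = Σ g₍₁₎ ⊗ (Sg₍₂₎)h. Then for every φ ∈ H*, W⁻¹ ∘ (id ⊗ R*_φ) ∘ W = Σ R*_{φ₍₁₎} ⊗ R*_{φ₍₂₎}, where Δφ is the convolution comultiplication determined by ⟨Δφ, h ⊗ g⟩ = ⟨φ, hg⟩. -/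

import Mathlib

/-!
`W⁻¹` is a left inverse of `W`: `W⁻¹ W (g ⊗ h) = Σ g₍₁₎ ⊗ S(g₍₂₎) g₍₃₎ h = g ⊗ h` by
coassociativity and the antipode axiom. So it suffices to show
`(id ⊗ R*_φ) ∘ W = W ∘ Σ R*_{φ₍₁₎} ⊗ R*_{φ₍₂₎}`, which needs no antipode: since `Δ` is
multiplicative, both sides send `g ⊗ h` to `Σ g₍₁₎ ⊗ g₍₂₎ h₍₁₎ ⟨φ, g₍₃₎ h₍₂₎⟩`.
-/

open TensorProduct Coalgebra LinearMap

variable (k H : Type*) [Field k] [Ring H] [HopfAlgebra k H]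

/-- The fundamental operator `W(g ⊗ h) = Σ g₍₁₎ ⊗ g₍₂₎h`. -/
noncomputable def fundW : H ⊗[k] H →ₗ[k] H ⊗[k] H :=
  (LinearMap.lTensor H (LinearMap.mul' k H)) ∘ₗ
    (TensorProduct.assoc k H H H).toLinearMap ∘ₗ
      (LinearMap.rTensor H (Coalgebra.comul (R := k)))

/-- The inverse operator `W⁻¹(g ⊗ h) = Σ g₍₁₎ ⊗ (S g₍₂₎)h`. -/
noncomputable def fundW' : H ⊗[k] H →ₗ[k] H ⊗[k] H :=
  (LinearMap.lTensor H
      ((LinearMap.mul' k H) ∘ₗ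
        LinearMap.rTensor H (HopfAlgebra.antipode (R := k) (A := H)))) ∘ₗ
    (TensorProduct.assoc k H H H).toLinearMap ∘ₗ
      (LinearMap.rTensor H (Coalgebra.comul (R := k)))

/-- The left coregular representation `R*_φ = (id ⊗ φ) ∘ Δ`. -/
noncomputable def coreg (φ : H →ₗ[k] k) : H →ₗ[k] H :=
  (TensorProduct.rid k H).toLinearMap ∘ₗ (LinearMap.lTensor H φ) ∘ₗ
    (Coalgebra.comul (R := k))

/-- The operator `Σ R*_{φ₍₁₎} ⊗ R*_{φ₍₂₎}` on `H ⊗ H`, where `Δφ` is the convolution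
comultiplication determined by `⟨Δφ, h ⊗ g⟩ = ⟨φ, hg⟩`: on `g ⊗ g'` it gives
`Σ g₍₁₎ ⊗ g'₍₁₎ ⟨φ, g₍₂₎ g'₍₂₎⟩`. -/
noncomputable def coregComul (φ : H →ₗ[k] k) : H ⊗[k] H →ₗ[k] H ⊗[k] H :=
  (TensorProduct.rid k (H ⊗[k] H)).toLinearMap ∘ₗ
    (LinearMap.lTensor (H ⊗[k] H) (φ ∘ₗ LinearMap.mul' k H)) ∘ₗ
      (TensorProduct.tensorTensorTensorComm k H H H H).toLinearMap ∘ₗ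
        (TensorProduct.map (Coalgebra.comul (R := k)) (Coalgebra.comul (R := k)))

section

variable {k H}

/-- `coregMulRight φ h (b ⊗ c) = Σ b h₍₁₎ ⟨φ, c h₍₂₎⟩`. -/
noncomputable def coregMulRight (φ : H →ₗ[k] k) (h : H) : H ⊗[k] H →ₗ[k] H :=
  (TensorProduct.rid k H).toLinearMap ∘ₗ lTensor H φ ∘ₗ mulRight k (comul (R := k) h)

theorem coregMulRight_tmul (φ : H →ₗ[k] k) (h b c : H) :
    coregMulRight φ h (b ⊗ₜ c) = b * coregMulRight φ h (1 ⊗ₜ c) := by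
  simp only [coregMulRight, comp_apply, mulRight_apply]
  induction comul (R := k) h using TensorProduct.induction_on with
  | zero => simp
  | tmul d e => simp [Algebra.TensorProduct.tmul_mul_tmul]
  | add x y hx hy => simp only [mul_add, map_add, hx, hy]

theorem coreg_comp_mulRight (φ : H →ₗ[k] k) (h : H) :
    coreg k H φ ∘ₗ mulRight k h = coregMulRight φ h ∘ₗ comul := by
  ext x
  simp [coreg, coregMulRight, Bialgebra.comul_mul]

theorem coregComul_tmul (φ : H →ₗ[k] k) (g h : H) :
    coregComul k H φ (g ⊗ₜ h) =
      lTensor H (coregMulRight φ h ∘ₗ TensorProduct.mk k H H 1) (comul g) := by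
  simp only [coregComul, coregMulRight, comp_apply, LinearEquiv.coe_coe, map_tmul]
  induction comul (R := k) g using TensorProduct.induction_on with
  | zero => simp
  | add x y hx hy => simp only [add_tmul, map_add, hx, hy]
  | tmul a b =>
    induction comul (R := k) h using TensorProduct.induction_on with
    | zero => simp
    | add x y hx hy => simp_all [tmul_add, mul_add]
    | tmul c d => simp [Algebra.TensorProduct.tmul_mul_tmul, tmul_smul]

theorem fundW_tmul (g h : H) : fundW k H (g ⊗ₜ h) = lTensor H (mulRight k h) (comul g) := by
  simp only [fundW, comp_apply, LinearEquiv.coe_coe, rTensor_tmul]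
  induction comul (R := k) g using TensorProduct.induction_on with
  | zero => simp
  | tmul a b => simp
  | add x y hx hy => simp only [add_tmul, map_add, hx, hy]

theorem fundW'_tmul (g h : H) :
    fundW' k H (g ⊗ₜ h) = lTensor H (mulRight k h ∘ₗ HopfAlgebra.antipode k) (comul g) := by
  simp only [fundW', comp_apply, LinearEquiv.coe_coe, rTensor_tmul]
  induction comul (R := k) g using TensorProduct.induction_on with
  | zero => simp
  | tmul a b => simp
  | add x y hx hy => simp only [add_tmul, map_add, hx, hy]

theorem fundW'_comul (g : H) : fundW' k H (comul g) = g ⊗ₜ 1 := by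
  rw [fundW', comp_apply, comp_apply, LinearEquiv.coe_coe, coassoc_apply, ← lTensor_comp_apply,
    comp_assoc, HopfAlgebra.mul_antipode_rTensor_comul, lTensor_comp_apply, lTensor_counit_comul]
  simp

theorem fundW'_lTensor_mulRight (h : H) (x : H ⊗[k] H) :
    fundW' k H (lTensor H (mulRight k h) x) = lTensor H (mulRight k h) (fundW' k H x) := by
  induction x using TensorProduct.induction_on with
  | zero => simp
  | tmul a b => simp [fundW'_tmul, ← lTensor_comp_apply, comp_assoc]
  | add x y hx hy => simp only [map_add, hx, hy]

theorem fundW'_comp_fundW : fundW' k H ∘ₗ fundW k H = LinearMap.id := by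
  ext g h
  simp [fundW_tmul, fundW'_lTensor_mulRight, fundW'_comul]

theorem fundW_lTensor_coregMulRight (φ : H →ₗ[k] k) (h : H) (x : H ⊗[k] H) :
    fundW k H (lTensor H (coregMulRight φ h ∘ₗ TensorProduct.mk k H H 1) x) =
      lTensor H (coregMulRight φ h) (TensorProduct.assoc k H H H (rTensor H comul x)) := by
  induction x using TensorProduct.induction_on with
  | zero => simp
  | add x y hx hy => simp only [map_add, hx, hy]
  | tmul a c =>
    simp only [lTensor_tmul, comp_apply, mk_apply, fundW_tmul, rTensor_tmul]
    induction comul (R := k) a using TensorProduct.induction_on with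
    | zero => simp
    | tmul b d => simp [coregMulRight_tmul φ h d c]
    | add x y hx hy => simp only [add_tmul, map_add, hx, hy]

theorem lTensor_coreg_comp_fundW (φ : H →ₗ[k] k) :
    lTensor H (coreg k H φ) ∘ₗ fundW k H = fundW k H ∘ₗ coregComul k H φ := by
  ext g h
  calc lTensor H (coreg k H φ) (fundW k H (g ⊗ₜ h))
      = lTensor H (coregMulRight φ h) (lTensor H comul (comul g)) := by
        rw [fundW_tmul, ← lTensor_comp_apply, coreg_comp_mulRight, lTensor_comp_apply]
    _ = lTensor H (coregMulRight φ h)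
          (TensorProduct.assoc k H H H (rTensor H comul (comul g))) := by
        rw [coassoc_apply]
    _ = fundW k H (coregComul k H φ (g ⊗ₜ h)) := by
        rw [coregComul_tmul, fundW_lTensor_coregMulRight]

end

/-- `W⁻¹ ∘ (id ⊗ R*_φ) ∘ W = Σ R*_{φ₍₁₎} ⊗ R*_{φ₍₂₎}` for every `φ ∈ H*`. -/
theorem fundW_coreg_conjugation (φ : H →ₗ[k] k) :
    fundW' k H ∘ₗ (LinearMap.lTensor H (coreg k H φ)) ∘ₗ fundW k H =
      coregComul k H φ := by
  rw [lTensor_coreg_comp_fundW, ← comp_assoc, fundW'_comp_fundW, id_comp]
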